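/- Let θ ∈ ℂ and let y, z : ℂ → ℂ be holomorphic. Define, for μ ∈ ℂ∖{0} and t ∈ ℂ, A(μ,t) = μ·[[0,1],[0,0]] + [[−y, −(z+2y²+t)],[1/2, y]] + (1/(2μ))·[[θ,0],[z,−θ]] and U(μ,t) = −(μ·[[0,1],[0,0]] + [[−y,0],[1/2,y]]). Then the zero-curvature equation ∂A/∂t − ∂U/∂μ + A·U − U·A = 0 holds for all μ ∈ ℂ∖{0} and t ∈ ℂ if and only if y′ = y² + z + t/2 and z′ = −2z·y − θ hold for all t ∈ ℂ. -/

import Mathlib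

open Matrix Complex

noncomputable section

/-- The `μ`-coefficient matrix of the Harnad–Tracy–Widom pair `HTW` with parameter `θ`. -/
def A₈ (θ : ℂ) (y z : ℂ → ℂ) (μ t : ℂ) : Matrix (Fin 2) (Fin 2) ℂ :=
  μ • (!![0,1; 0,0] : Matrix (Fin 2) (Fin 2) ℂ) +
    !![-y t, -(z t + 2*(y t)^2 + t); 1/2, y t] +
    (1/(2*μ)) • !![θ, 0; z t, -θ]

/-- The `t`-coefficient matrix of the Harnad–Tracy–Widom pair `HTW`. -/
def U₈ (y : ℂ → ℂ) (μ t : ℂ) : Matrix (Fin 2) (Fin 2) ℂ :=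
  -(μ • (!![0,1; 0,0] : Matrix (Fin 2) (Fin 2) ℂ) + !![-y t, 0; 1/2, y t])

/-!
With the residuals `P = y' - (y² + z + t/2)` and `Q = z' - (-2zy - θ)`, the zero-curvature
matrix of the pair is `!![-P, -(Q + 4yP); Q/(2μ), P]`, which vanishes exactly when `P = Q = 0`.
-/

theorem deriv_entries_A₈ {θ μ t : ℂ} {y z : ℂ → ℂ}
    (hy : DifferentiableAt ℂ y t) (hz : DifferentiableAt ℂ z t) :
    (Matrix.of fun i j => deriv (fun s => A₈ θ y z μ s i j) t) =
      !![-deriv y t, -(deriv z t + 4 * y t * deriv y t + 1);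
        deriv z t / (2 * μ), deriv y t] := by
  have h01 : HasDerivAt (fun s => A₈ θ y z μ s 0 1)
      (-(deriv z t + 4 * y t * deriv y t + 1)) t := by
    have h := ((hz.hasDerivAt.fun_add ((hy.hasDerivAt.fun_pow 2).const_mul 2)).fun_add
      (hasDerivAt_id' t)).fun_neg.const_add μ
    have e : (fun s => A₈ θ y z μ s 0 1) = fun s => μ + -(z s + 2 * y s ^ 2 + s) := by
      ext s; simp [A₈]
    rw [e]
    exact h.congr_deriv (by norm_num; ring)
  ext i j
  fin_cases i <;> fin_cases j
  · simp [A₈, hy]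
  · exact h01.deriv
  · simp [A₈, hz, div_eq_inv_mul]
  · simp [A₈, hy]

theorem deriv_entries_U₈ (y : ℂ → ℂ) (μ t : ℂ) :
    (Matrix.of fun i j => deriv (fun m => U₈ y m t i j) μ) = !![0, -1; 0, 0] := by
  ext i j
  fin_cases i <;> fin_cases j <;> simp [U₈]

theorem commutator_A₈_U₈ (θ : ℂ) (y z : ℂ → ℂ) {μ : ℂ} (hμ : μ ≠ 0) (t : ℂ) :
    A₈ θ y z μ t * U₈ y μ t - U₈ y μ t * A₈ θ y z μ t =
      !![z t + y t ^ 2 + t / 2, 2 * (z t + 2 * y t ^ 2 + t) * y t - θ;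
        (2 * z t * y t + θ) / (2 * μ), -(z t + y t ^ 2 + t / 2)] := by
  ext i j
  fin_cases i <;> fin_cases j <;> simp [A₈, U₈] <;> field_simp <;> ring

theorem zeroCurvature_A₈_U₈ (θ : ℂ) {y z : ℂ → ℂ} {μ : ℂ} (hμ : μ ≠ 0) {t : ℂ}
    (hy : DifferentiableAt ℂ y t) (hz : DifferentiableAt ℂ z t) :
    let P := deriv y t - (y t ^ 2 + z t + t / 2)
    let Q := deriv z t - (-2 * z t * y t - θ)
    (Matrix.of fun i j => deriv (fun s => A₈ θ y z μ s i j) t)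
        - (Matrix.of fun i j => deriv (fun m => U₈ y m t i j) μ)
        + A₈ θ y z μ t * U₈ y μ t - U₈ y μ t * A₈ θ y z μ t =
      !![-P, -(Q + 4 * y t * P); Q / (2 * μ), P] := by
  intro P Q
  rw [add_sub_assoc, deriv_entries_A₈ hy hz, deriv_entries_U₈, commutator_A₈_U₈ θ y z hμ]
  ext i j
  fin_cases i <;> fin_cases j <;> simp [P, Q] <;> ring

theorem residual_matrix_eq_zero_iff {K : Type*} [Field K] [NeZero (2 : K)] {P Q μ w : K}
    (hμ : μ ≠ 0) : !![-P, -(Q + 4 * w * P); Q / (2 * μ), P] = 0 ↔ P = 0 ∧ Q = 0 := by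
  constructor
  · intro h
    have hP : P = 0 := by simpa using congrFun (congrFun h 1) 1
    have hQ : Q / (2 * μ) = 0 := congrFun (congrFun h 1) 0
    exact ⟨hP, (div_eq_zero_iff.1 hQ).resolve_right (mul_ne_zero two_ne_zero hμ)⟩
  · rintro ⟨rfl, rfl⟩
    ext i j
    fin_cases i <;> fin_cases j <;> simp

/-- The zero-curvature equation for the Harnad–Tracy–Widom pair holds for all
`μ ≠ 0` and all `t` iff `y' = y² + z + t/2` and `z' = −2zy − θ`. -/
theorem stmt_8 (θ : ℂ) (y z : ℂ → ℂ)
    (hy : Differentiable ℂ y) (hz : Differentiable ℂ z) :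
    (∀ μ : ℂ, μ ≠ 0 → ∀ t : ℂ,
      (Matrix.of fun i j => deriv (fun s => A₈ θ y z μ s i j) t)
        - (Matrix.of fun i j => deriv (fun m => U₈ y m t i j) μ)
        + A₈ θ y z μ t * U₈ y μ t - U₈ y μ t * A₈ θ y z μ t = 0)
    ↔ (∀ t : ℂ, deriv y t = (y t)^2 + z t + t/2 ∧
        deriv z t = -2*(z t)*(y t) - θ) := by
  constructor
  · intro h t
    have h1 := h 1 one_ne_zero t
    rwa [zeroCurvature_A₈_U₈ θ one_ne_zero (hy t) (hz t),
      residual_matrix_eq_zero_iff one_ne_zero, sub_eq_zero, sub_eq_zero] at h1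
  · intro h μ hμ t
    rw [zeroCurvature_A₈_U₈ θ hμ (hy t) (hz t), residual_matrix_eq_zero_iff hμ,
      sub_eq_zero, sub_eq_zero]
    exact h t
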